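/- Let G = (V,E) be a DAG, let L ⊆ V, and let M = G[∅_L be the MAG obtained by marginalizing L. Suppose Z₀, Z₁, Z₂ is a path in M on which Z₁ is a non-collider, an inducing path π₀₁ from Z₀ to Z₁ with respect to ∅ and L in G has an arrowhead at Z₁, and an inducing path π₁₂ from Z₁ to Z₂ with respect to ∅ and L in G has an arrowhead at Z₁. Then the walk w₀₁₂ = π₀₁π₁₂ can be truncated to an inducing path from Z₀ to Z₂ with respect to ∅ and L in G. -/

import Mathlib

/-!
Common definitions: mixed graphs, walks, colliders, m-separation,
ancestral graphs, DAGs, MAGs, proper causal paths, adjustment criteria,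
inducing paths, and MAG marginalization.
-/

universe u

/-- The four possible kinds of edges of a mixed graph, oriented along the
direction of traversal: `u → v`, `u ← v`, `u ↔ v`, `u − v`. -/
inductive EType where
  | right : EType
  | left : EType
  | both : EType
  | undirEdge : EType
deriving DecidableEq

namespace EType

/-- The edge has an arrowhead at its first endpoint. -/
def headFst : EType → Prop
  | .left => True
  | .both => True
  | _ => False

/-- The edge has an arrowhead at its second endpoint. -/
def headSnd : EType → Prop
  | .right => True
  | .both => True
  | _ => False

end EType

/-- A mixed graph with directed, bidirected and undirected edges. -/
structure MixedGraph (V : Type u) where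
  dir : V → V → Prop
  bi : V → V → Prop
  undir : V → V → Prop
  bi_symm : ∀ u v, bi u v → bi v u
  undir_symm : ∀ u v, undir u v → undir v u

namespace MixedGraph

variable {V : Type u}

/-- `G.IsEdge e u v` holds if the graph contains the edge `e` from `u` to `v`
(read in the direction of traversal). -/
def IsEdge (G : MixedGraph V) : EType → V → V → Prop
  | .right, u, v => G.dir u v
  | .left, u, v => G.dir v u
  | .both, u, v => G.bi u v
  | .undirEdge, u, v => G.undir u v

/-- Walks in a mixed graph, remembering the type of every traversed edge. -/
inductive Walk (G : MixedGraph V) : V → V → Type u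
  | nil (v : V) : Walk G v v
  | cons (u v w : V) (e : EType) (h : G.IsEdge e u v) (p : Walk G v w) : Walk G u w

namespace Walk

variable {G : MixedGraph V}

/-- The list of nodes visited by a walk (with multiplicity). -/
def support : {a b : V} → G.Walk a b → List V
  | _, _, .nil v => [v]
  | _, _, .cons u _ _ _ _ p => u :: p.support

/-- A path is a walk without repeated nodes. -/
def IsPath {a b : V} (p : G.Walk a b) : Prop := p.support.Nodup

/-- Auxiliary m-connectivity check: `ph` records whether the previous edge of
the walk has an arrowhead at the current start node.  At every interior node,
the node must be a collider (two arrowheads meet) iff it belongs to `Z`. -/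
def connFrom (Z : Set V) : Prop → {a b : V} → G.Walk a b → Prop
  | _, _, _, .nil _ => True
  | ph, _, _, .cons u _ _ e _ p =>
      ((ph ∧ e.headFst) ↔ u ∈ Z) ∧ p.connFrom Z e.headSnd

/-- The walk m-connects its endpoints given `Z`: all colliders and only
colliders on it are in `Z`. -/
def ConnBy (Z : Set V) : {a b : V} → G.Walk a b → Prop
  | _, _, .nil _ => True
  | _, _, .cons _ _ _ e _ p => p.connFrom Z e.headSnd

/-- A causal (directed) walk: every edge points towards the end node. -/
def IsCausal : {a b : V} → G.Walk a b → Prop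
  | _, _, .nil _ => True
  | _, _, .cons _ _ _ e _ p => e = EType.right ∧ p.IsCausal

/-- A walk is proper w.r.t. `X` if only its start node may belong to `X`. -/
def ProperFrom (X : Set V) : {a b : V} → G.Walk a b → Prop
  | _, _, .nil _ => True
  | _, _, .cons _ _ _ _ _ p => ∀ n ∈ p.support, n ∉ X

/-- Concatenation of walks. -/
def append : {a b c : V} → G.Walk a b → G.Walk b c → G.Walk a c
  | _, _, _, .nil _, q => q
  | _, _, _, .cons u v _ e h p, q => .cons u v _ e h (p.append q)

/-- The walk is nonempty and its first edge has an arrowhead at the start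
node. -/
def headAtStart : {a b : V} → G.Walk a b → Prop
  | _, _, .nil _ => False
  | _, _, .cons _ _ _ e _ _ => e.headFst

/-- The walk is nonempty and its last edge has an arrowhead at the end node. -/
def headAtEnd : {a b : V} → G.Walk a b → Prop
  | _, _, .nil _ => False
  | _, _, .cons _ _ _ e _ (.nil _) => e.headSnd
  | _, _, .cons _ _ _ _ _ p => p.headAtEnd

/-- `P` holds of every (ordered) pair of consecutive nodes of the walk. -/
def edgeProp (P : V → V → Prop) : {a b : V} → G.Walk a b → Prop
  | _, _, .nil _ => True
  | _, _, .cons u v _ _ _ p => P u v ∧ p.edgeProp P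

end Walk

/-- `x` and `y` are m-connected given `Z`: there is a walk between them on
which all colliders and only colliders are in `Z`. -/
def MConn (G : MixedGraph V) (Z : Set V) (x y : V) : Prop :=
  ∃ p : G.Walk x y, p.ConnBy Z

/-- `Z` m-separates the node sets `X` and `Y`. -/
def MSep (G : MixedGraph V) (X Y Z : Set V) : Prop :=
  ∀ x ∈ X, ∀ y ∈ Y, ¬ G.MConn Z x y

/-- `Z` is an m-separator relative to `(X, Y)`: it is disjoint from `X ∪ Y`
and m-separates `X` and `Y`. -/
def IsMSep (G : MixedGraph V) (X Y Z : Set V) : Prop :=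
  Disjoint Z (X ∪ Y) ∧ G.MSep X Y Z

/-- An `M`-minimal m-separator relative to `(X, Y)`. -/
def IsMinMSep (G : MixedGraph V) (X Y M Z : Set V) : Prop :=
  G.IsMSep X Y Z ∧ M ⊆ Z ∧ ∀ Z', Z' ⊂ Z → M ⊆ Z' → ¬ G.IsMSep X Y Z'

/-- One step of the anterior relation: a directed or undirected edge. -/
def antEdge (G : MixedGraph V) (u v : V) : Prop := G.dir u v ∨ G.undir u v

/-- `u` is an anterior of `v` (every node is its own anterior). -/
def Anterior (G : MixedGraph V) (u v : V) : Prop :=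
  Relation.ReflTransGen G.antEdge u v

/-- The set of anteriors of nodes of `W`. -/
def Ant (G : MixedGraph V) (W : Set V) : Set V := {u | ∃ w ∈ W, G.Anterior u w}

/-- `v` is a descendant of `u`, i.e. there is a directed path `u → ⋯ → v`
(every node is its own descendant/ancestor). -/
def Anc (G : MixedGraph V) (u v : V) : Prop := Relation.ReflTransGen G.dir u v

/-- The set of descendants of nodes of `W`. -/
def De (G : MixedGraph V) (W : Set V) : Set V := {v | ∃ w ∈ W, G.Anc w v}

/-- The set of ancestors of nodes of `W`. -/
def AnSet (G : MixedGraph V) (W : Set V) : Set V := {v | ∃ w ∈ W, G.Anc v w}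

/-- An ancestral graph: (1) for each edge `a ← b` or `a ↔ b`, `a` is not an
anterior of `b`; (2) for each edge `a − b` there is no edge `a ← c`, `a ↔ c`,
`b ← c` or `b ↔ c`. -/
def IsAG (G : MixedGraph V) : Prop :=
  (∀ a b, G.dir b a ∨ G.bi a b → ¬ G.Anterior a b) ∧
  (∀ a b, G.undir a b →
    ∀ c, ¬ G.dir c a ∧ ¬ G.bi a c ∧ ¬ G.dir c b ∧ ¬ G.bi b c)

/-- A DAG: only directed edges, and no directed cycles. -/
def IsDAG (G : MixedGraph V) : Prop :=
  (∀ u v, ¬ G.bi u v) ∧ (∀ u v, ¬ G.undir u v) ∧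
  (∀ v, ¬ Relation.TransGen G.dir v v)

/-- Two nodes are adjacent if they are joined by some edge. -/
def Adjacent (G : MixedGraph V) (u v : V) : Prop :=
  G.dir u v ∨ G.dir v u ∨ G.bi u v ∨ G.undir u v

/-- A maximal ancestral graph (MAG): only directed and bidirected edges, no
directed cycle, no almost-directed cycle, and every pair of non-adjacent
nodes can be m-separated by some set of the remaining nodes. -/
def IsMAG (G : MixedGraph V) : Prop :=
  (∀ u v, ¬ G.undir u v) ∧
  (∀ v, ¬ Relation.TransGen G.dir v v) ∧
  (∀ u v, G.bi u v → ¬ Relation.TransGen G.dir v u) ∧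
  (∀ u v, u ≠ v → ¬ G.Adjacent u v →
    ∃ Z : Set V, u ∉ Z ∧ v ∉ Z ∧ ¬ G.MConn Z u v)

/-- `PCP G X Y`: the set of nodes, excluding nodes of `X`, that lie on a
proper causal path from `X` to `Y`. -/
def PCP (G : MixedGraph V) (X Y : Set V) : Set V :=
  {w | w ∉ X ∧ ∃ x ∈ X, ∃ y ∈ Y, ∃ p : G.Walk x y,
    p.IsPath ∧ p.IsCausal ∧ p.ProperFrom X ∧ w ∈ p.support}

/-- `Dpcp G X Y`: the descendants of nodes on proper causal paths. -/
def Dpcp (G : MixedGraph V) (X Y : Set V) : Set V := G.De (G.PCP X Y)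

/-- Remove from `G` all edges into `A` and all edges out of `B`. -/
def rmInOut (G : MixedGraph V) (A B : Set V) : MixedGraph V where
  dir u v := G.dir u v ∧ v ∉ A ∧ u ∉ B
  bi u v := G.bi u v ∧ u ∉ A ∧ v ∉ A
  undir u v := G.undir u v ∧ u ∉ B ∧ v ∉ B
  bi_symm := fun u v h => ⟨G.bi_symm u v h.1, h.2.2, h.2.1⟩
  undir_symm := fun u v h => ⟨G.undir_symm u v h.1, h.2.2, h.2.1⟩

/-- The parametrized proper back-door graph: remove every edge `x → d` with
`x ∈ X` and `d ∈ PCP(X,Y) ∪ C`. -/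
def pbdC (G : MixedGraph V) (X Y C : Set V) : MixedGraph V where
  dir u v := G.dir u v ∧ ¬(u ∈ X ∧ v ∈ G.PCP X Y ∪ C)
  bi := G.bi
  undir := G.undir
  bi_symm := G.bi_symm
  undir_symm := G.undir_symm

/-- The proper back-door graph. -/
def pbd (G : MixedGraph V) (X Y : Set V) : MixedGraph V := G.pbdC X Y ∅

/-- The adjustment criterion (AC) in a DAG: (a) no element of `Z` is a
descendant in `G_{X̄}` of a node outside `X` lying on a proper causal path
from `X` to `Y`; (b) every proper non-causal path from `X` to `Y` is blocked
by `Z`. -/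
def SatisfiesACdag (G : MixedGraph V) (X Y Z : Set V) : Prop :=
  (∀ z ∈ Z, z ∉ (G.rmInOut X ∅).De (G.PCP X Y)) ∧
  (∀ x ∈ X, ∀ y ∈ Y, ∀ p : G.Walk x y,
    p.IsPath → p.ProperFrom X → ¬ p.IsCausal → ¬ p.ConnBy Z)

/-- The adjustment criterion (AC) in a MAG: (a) no element of `Z` is a
descendant in `M` of a node outside `X` lying on a proper causal path from
`X` to `Y`; (b) every proper non-causal path from `X` to `Y` is blocked by
`Z`. -/
def SatisfiesACmag (G : MixedGraph V) (X Y Z : Set V) : Prop :=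
  (∀ z ∈ Z, z ∉ G.Dpcp X Y) ∧
  (∀ x ∈ X, ∀ y ∈ Y, ∀ p : G.Walk x y,
    p.IsPath → p.ProperFrom X → ¬ p.IsCausal → ¬ p.ConnBy Z)

/-- The constructive back-door criterion (CBC): (a) `Z` avoids
`Dpcp(X,Y)`; (b) `Z` m-separates `X` and `Y` in the proper back-door
graph. -/
def SatisfiesCBC (G : MixedGraph V) (X Y Z : Set V) : Prop :=
  (∀ z ∈ Z, z ∉ G.Dpcp X Y) ∧ (G.pbd X Y).MSep X Y Z

/-- The parametrized constructive back-door criterion CBC(A,B,C). -/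
def SatisfiesCBCP (G : MixedGraph V) (X Y Z A B C : Set V) : Prop :=
  (∀ z ∈ Z, z ∉ (G.rmInOut A B).De (G.PCP X Y)) ∧ (G.pbdC X Y C).MSep X Y Z

namespace Walk

variable {G : MixedGraph V}

/-- Auxiliary check for inducing paths: every interior non-collider is in
`L`, and every interior collider is an ancestor of a node of `T`.  `ph`
records whether the previous edge has an arrowhead at the current node. -/
def indFrom (L T : Set V) : Prop → {a b : V} → G.Walk a b → Prop
  | _, _, _, .nil _ => True
  | ph, _, _, .cons u _ _ e _ p =>
      ((ph ∧ e.headFst) → ∃ t ∈ T, Relation.ReflTransGen G.dir u t) ∧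
      (¬(ph ∧ e.headFst) → u ∈ L) ∧ p.indFrom L T e.headSnd

/-- Interior conditions for inducing paths (endpoints are exempt). -/
def indBody (L T : Set V) : {a b : V} → G.Walk a b → Prop
  | _, _, .nil _ => True
  | _, _, .cons _ _ _ e _ p => p.indFrom L T e.headSnd

end Walk

/-- `p` is an inducing path with respect to `Z` and `L`: a path on which
every non-collider other than the endpoints is in `L` and every collider is
an ancestor of the endpoints or of `Z`. -/
def IsInducing (G : MixedGraph V) (Z L : Set V) {a b : V} (p : G.Walk a b) : Prop :=
  p.IsPath ∧ p.indBody L ({a, b} ∪ Z)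

/-- Adjacency in the MAG `G[∅_L`: `u, v ∉ L` are adjacent iff they cannot be
d-separated in `G` by any set `W ⊆ V∖L` (not containing `u, v`). -/
def magAdj (G : MixedGraph V) (L : Set V) (u v : V) : Prop :=
  u ∉ L ∧ v ∉ L ∧ u ≠ v ∧
  ∀ W : Set V, Disjoint W L → u ∉ W → v ∉ W → (G.MConn W u v ∧ G.MConn W v u)

/-- The MAG `G[∅_L` obtained from the DAG `G` by marginalizing `L`: adjacent
`u, v` are joined by `u → v` if `u` is an ancestor of `v` in `G` and `v` is
not an ancestor of `u`, and by `u ↔ v` if neither is an ancestor of the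
other. -/
def mag (G : MixedGraph V) (L : Set V) : MixedGraph V where
  dir u v := G.magAdj L u v ∧ G.Anc u v ∧ ¬ G.Anc v u
  bi u v := G.magAdj L u v ∧ ¬ G.Anc u v ∧ ¬ G.Anc v u
  undir _ _ := False
  bi_symm := fun u v h =>
    ⟨⟨h.1.2.1, h.1.1, h.1.2.2.1.symm,
      fun W hW hv hu => ⟨(h.1.2.2.2 W hW hu hv).2, (h.1.2.2.2 W hW hu hv).1⟩⟩,
      h.2.2, h.2.1⟩
  undir_symm := fun _ _ h => h.elim

/-- An inducing `Z`-trail in the MAG `G[∅_L`: a path whose interior nodes are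
exactly the `Z`-nodes on it, each consecutive pair being linked in `G` by an
inducing path w.r.t. `∅, L` which has arrowheads at the interior nodes. -/
def IsInducingZTrail (G : MixedGraph V) (Z L : Set V) {a b : V}
    (p : (G.mag L).Walk a b) : Prop :=
  p.IsPath ∧ a ∉ Z ∧ b ∉ Z ∧
  (∀ v ∈ p.support, v ≠ a → v ≠ b → v ∈ Z) ∧
  p.edgeProp (fun u v => ∃ q : G.Walk u v, G.IsInducing ∅ L q ∧
    (u ∈ Z → q.headAtStart) ∧ (v ∈ Z → q.headAtEnd))

end MixedGraph

open MixedGraph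

variable {V : Type u}

/-!
On the MAG path `Z₀, Z₁, Z₂` the node `Z₁` is a non-collider, so it is the tail of a directed MAG
edge and hence a `G`-ancestor of `Z₀` or of `Z₂`. On the concatenation `π₀₁π₁₂` the node `Z₁` is a
collider, and every collider of either piece is an ancestor of `Z₀`, `Z₁` or `Z₂`, hence of `Z₀`
or `Z₂`; every non-collider is in `L`. It remains to shortcut the walk to a path. Cutting out a
closed walk `a → b ⋯ a` can turn `a` into a collider, but then following the closed walk from `b`
either stays directed all the way back to `a`, which acyclicity forbids, or meets a collider,
which is an ancestor of an endpoint and a descendant of `a`.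
-/

namespace MixedGraph

theorem anc_of_mag_not_collider {G : MixedGraph V} {L : Set V} {a b c : V} {e₁ e₂ : EType}
    (h₁ : (G.mag L).IsEdge e₁ a b) (h₂ : (G.mag L).IsEdge e₂ b c)
    (hnc : ¬ (e₁.headSnd ∧ e₂.headFst)) : G.Anc b a ∨ G.Anc b c := by
  cases e₁ with
  | left => exact Or.inl h₁.2.1
  | undirEdge => exact h₁.elim
  | right | both =>
    cases e₂ with
    | right => exact Or.inr h₂.2.1
    | undirEdge => exact h₂.elim
    | left | both => exact (hnc ⟨trivial, trivial⟩).elim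

namespace Walk

variable {G : MixedGraph V} {L T T' : Set V}

/-- Whether an arrowhead of the walk meets its end node, with `ph` standing in for the empty
walk, as in `indFrom`. -/
def headAtEndFrom : Prop → {a b : V} → G.Walk a b → Prop
  | ph, _, _, .nil _ => ph
  | _, _, _, .cons _ _ _ e _ p => p.headAtEndFrom e.headSnd

theorem headAtEndFrom_of_headAtEnd : ∀ {a b : V} (p : G.Walk a b) (ph : Prop),
    p.headAtEnd → p.headAtEndFrom ph
  | _, _, .nil _, _, h => h.elim
  | _, _, .cons _ _ _ _ _ (.nil _), _, h => h
  | _, _, .cons _ _ _ e₀ _ (.cons u v w e he p), _, h =>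
      headAtEndFrom_of_headAtEnd (.cons u v w e he p) e₀.headSnd h

theorem support_sublist_append_right : ∀ {a b c : V} (p : G.Walk a b) (q : G.Walk b c),
    q.support.Sublist (p.append q).support
  | _, _, _, .nil _, _ => .refl _
  | _, _, _, .cons _ _ _ _ _ p, q => (support_sublist_append_right p q).cons _

theorem exists_eq_append_of_mem_support : ∀ {v w : V} (q : G.Walk v w) {u : V},
    u ∈ q.support → ∃ (p₁ : G.Walk v u) (p₂ : G.Walk u w), q = p₁.append p₂
  | _, _, .nil _, _, hu => by
      obtain rfl := List.mem_singleton.mp hu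
      exact ⟨.nil _, .nil _, rfl⟩
  | _, _, .cons a b c e he p, u, hu => by
      by_cases hua : u = a
      · subst hua
        exact ⟨.nil _, .cons u b c e he p, rfl⟩
      · obtain ⟨p₁, p₂, rfl⟩ :=
          exists_eq_append_of_mem_support p ((List.mem_cons.mp hu).resolve_left hua)
        exact ⟨.cons a b u e he p₁, p₂, rfl⟩

theorem indFrom_mono (hT : ∀ t ∈ T, ∃ t' ∈ T', G.Anc t t') :
    ∀ {a b : V} (p : G.Walk a b) (ph : Prop), p.indFrom L T ph → p.indFrom L T' ph
  | _, _, .nil _, _, _ => trivial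
  | _, _, .cons _ _ _ _ _ p, _, h =>
      ⟨fun hc => by
          obtain ⟨t, ht, hut⟩ := h.1 hc
          obtain ⟨t', ht', htt'⟩ := hT t ht
          exact ⟨t', ht', hut.trans htt'⟩,
        h.2.1, indFrom_mono hT p _ h.2.2⟩

theorem indBody_mono (hT : ∀ t ∈ T, ∃ t' ∈ T', G.Anc t t') :
    ∀ {a b : V} (p : G.Walk a b), p.indBody L T → p.indBody L T'
  | _, _, .nil _, _ => trivial
  | _, _, .cons _ _ _ _ _ p, h => indFrom_mono hT p _ h

theorem indBody_of_indFrom : ∀ {a b : V} (p : G.Walk a b) {ph : Prop},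
    p.indFrom L T ph → p.indBody L T
  | _, _, .nil _, _, _ => trivial
  | _, _, .cons _ _ _ _ _ _, _, h => h.2.2

theorem indFrom_append_iff : ∀ {a b c : V} (p : G.Walk a b) (q : G.Walk b c) (ph : Prop),
    (p.append q).indFrom L T ph ↔ p.indFrom L T ph ∧ q.indFrom L T (p.headAtEndFrom ph)
  | _, _, _, .nil _, _, _ => ⟨fun h => ⟨trivial, h⟩, And.right⟩
  | _, _, _, .cons _ _ _ _ _ p, q, _ => by
      simp only [append, indFrom, headAtEndFrom, indFrom_append_iff p q, and_assoc]

theorem indBody_append {a b c : V} (p : G.Walk a b) (q : G.Walk b c)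
    (hp : p.indBody L T) (hq : q.indBody L T) (hpe : p.headAtEnd) (hqs : q.headAtStart)
    (hb : ∃ t ∈ T, G.Anc b t) : (p.append q).indBody L T := by
  cases p with
  | nil => exact hpe.elim
  | cons a v b e he p₀ =>
    cases q with
    | nil => exact hqs.elim
    | cons b v' c e' he' q₀ =>
      have hcol : p₀.headAtEndFrom e.headSnd :=
        headAtEndFrom_of_headAtEnd (.cons a v b e he p₀) e.headSnd hpe
      exact (indFrom_append_iff p₀ _ _).mpr ⟨hp, fun _ => hb, fun h => (h ⟨hcol, hqs⟩).elim, hq⟩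

theorem anc_or_exists_anc_of_indFrom (hund : ∀ u v, ¬ G.undir u v) :
    ∀ {x y : V} (p : G.Walk x y), p.indFrom L T True → G.Anc x y ∨ ∃ t ∈ T, G.Anc x t
  | _, _, .nil _, _ => Or.inl .refl
  | _, _, .cons x b y e he p, h => by
      cases e with
      | right =>
          exact (anc_or_exists_anc_of_indFrom hund p h.2.2).imp (.head he)
            fun ⟨t, ht, hbt⟩ => ⟨t, ht, .head he hbt⟩
      | left => exact Or.inr (h.1 ⟨trivial, trivial⟩)
      | both => exact Or.inr (h.1 ⟨trivial, trivial⟩)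
      | undirEdge => exact (hund x b he).elim

theorem indFrom_of_cut_loop (hund : ∀ u v, ¬ G.undir u v)
    (hacyc : ∀ v, ¬ Relation.TransGen G.dir v v) {a b w : V} {e : EType} {ph ph' : Prop}
    (he : G.IsEdge e a b) (p₁ : G.Walk b a) (hloop : (Walk.cons a b a e he p₁).indFrom L T ph)
    (p₂ : G.Walk a w) (hp₂ : p₂.indFrom L T ph') : p₂.indFrom L T ph := by
  obtain ⟨hcol, hnon, hp₁⟩ := hloop
  cases p₂ with
  | nil => trivial
  | cons a v w e' he' p₂ =>
    refine ⟨fun ⟨hph, he'⟩ => ?_, fun hnc => ?_, hp₂.2.2⟩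
    · by_cases hc : ph ∧ e.headFst
      · exact hcol hc
      · cases e with
        | right =>
            rcases anc_or_exists_anc_of_indFrom hund p₁ hp₁ with hba | ⟨t, ht, hbt⟩
            · exact (hacyc a (Relation.TransGen.head' he hba)).elim
            · exact ⟨t, ht, .head he hbt⟩
        | left => exact (hc ⟨hph, trivial⟩).elim
        | both => exact (hc ⟨hph, trivial⟩).elim
        | undirEdge => exact (hund a b he).elim
    · by_cases hc' : ph' ∧ e'.headFst
      · exact hnon fun hc => hnc ⟨hc.1, hc'.2⟩
      · exact hp₂.2.1 hc'

theorem exists_isPath_indFrom (hund : ∀ u v, ¬ G.undir u v)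
    (hacyc : ∀ v, ¬ Relation.TransGen G.dir v v) :
    ∀ {v w : V} (q : G.Walk v w) (ph : Prop), q.indFrom L T ph →
      ∃ p : G.Walk v w, p.IsPath ∧ p.indFrom L T ph ∧ p.support.Sublist q.support
  | _, _, .nil v, _, _ => ⟨.nil v, List.nodup_singleton v, trivial, .refl _⟩
  | _, _, .cons a b c e he q, _, ⟨hcol, hnon, hq⟩ => by
      obtain ⟨p, hpath, hp, hsub⟩ := exists_isPath_indFrom hund hacyc q _ hq
      by_cases ha : a ∈ p.support
      · obtain ⟨p₁, p₂, rfl⟩ := exists_eq_append_of_mem_support p ha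
        have hsub₂ := support_sublist_append_right p₁ p₂
        have hloop := (indFrom_append_iff (.cons a b a e he p₁) p₂ _).mp ⟨hcol, hnon, hp⟩
        exact ⟨p₂, hsub₂.nodup hpath, indFrom_of_cut_loop hund hacyc he p₁ hloop.1 p₂ hloop.2,
          (hsub₂.trans hsub).trans (List.sublist_cons_self _ _)⟩
      · exact ⟨.cons a b c e he p, List.nodup_cons.mpr ⟨ha, hpath⟩, ⟨hcol, hnon, hp⟩,
          hsub.cons_cons a⟩

theorem exists_isPath_indBody (hund : ∀ u v, ¬ G.undir u v)
    (hacyc : ∀ v, ¬ Relation.TransGen G.dir v v) :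
    ∀ {v w : V} (q : G.Walk v w), q.indBody L T →
      ∃ p : G.Walk v w, p.IsPath ∧ p.indBody L T ∧ p.support.Sublist q.support
  | _, _, .nil v, _ => ⟨.nil v, List.nodup_singleton v, trivial, .refl _⟩
  | _, _, .cons a b c e he q, hq => by
      obtain ⟨p, hpath, hp, hsub⟩ := exists_isPath_indFrom hund hacyc q _ hq
      by_cases ha : a ∈ p.support
      · obtain ⟨p₁, p₂, rfl⟩ := exists_eq_append_of_mem_support p ha
        have hsub₂ := support_sublist_append_right p₁ p₂
        exact ⟨p₂, hsub₂.nodup hpath,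
          indBody_of_indFrom p₂ ((indFrom_append_iff p₁ p₂ _).mp hp).2,
          (hsub₂.trans hsub).trans (List.sublist_cons_self _ _)⟩
      · exact ⟨.cons a b c e he p, List.nodup_cons.mpr ⟨ha, hpath⟩, hp, hsub.cons_cons a⟩

end Walk

theorem indBody_append_of_anc {G : MixedGraph V} {L Z : Set V} {a b c : V}
    {p : G.Walk a b} {q : G.Walk b c}
    (hp : p.indBody L ({a, b} ∪ Z)) (hq : q.indBody L ({b, c} ∪ Z))
    (hpe : p.headAtEnd) (hqs : q.headAtStart) (hb : G.Anc b a ∨ G.Anc b c) :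
    (p.append q).indBody L ({a, c} ∪ Z) := by
  have hbT : ∃ t ∈ ({a, c} ∪ Z : Set V), G.Anc b t :=
    hb.elim (fun h => ⟨a, by simp, h⟩) (fun h => ⟨c, by simp, h⟩)
  have hT : ∀ x ∈ ({a, c} : Set V), ∀ t ∈ ({x, b} ∪ Z : Set V),
      ∃ t' ∈ ({a, c} ∪ Z : Set V), G.Anc t t' := by
    rintro x hx t ((rfl | rfl) | ht)
    exacts [⟨t, Or.inl hx, .refl⟩, hbT, ⟨t, Or.inr ht, .refl⟩]
  rw [Set.pair_comm] at hq
  exact Walk.indBody_append p q (Walk.indBody_mono (hT a (by simp)) p hp)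
    (Walk.indBody_mono (hT c (by simp)) q hq) hpe hqs hbT

end MixedGraph

theorem statement_16_general (G : MixedGraph V) (hDAG : G.IsDAG) (L : Set V)
    (Z₀ Z₁ Z₂ : V)
    (e₁ e₂ : EType)
    (h₁ : (G.mag L).IsEdge e₁ Z₀ Z₁) (h₂ : (G.mag L).IsEdge e₂ Z₁ Z₂)
    (hnoncol : ¬ (e₁.headSnd ∧ e₂.headFst))
    (π₀₁ : G.Walk Z₀ Z₁) (h₀₁ : G.IsInducing ∅ L π₀₁) (hhead₀₁ : π₀₁.headAtEnd)
    (π₁₂ : G.Walk Z₁ Z₂) (h₁₂ : G.IsInducing ∅ L π₁₂) (hhead₁₂ : π₁₂.headAtStart) :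
    ∃ p : G.Walk Z₀ Z₂, G.IsInducing ∅ L p ∧
      p.support.Sublist (π₀₁.append π₁₂).support := by
  have hwalk : (π₀₁.append π₁₂).indBody L ({Z₀, Z₂} ∪ ∅) :=
    indBody_append_of_anc h₀₁.2 h₁₂.2 hhead₀₁ hhead₁₂ (anc_of_mag_not_collider h₁ h₂ hnoncol)
  obtain ⟨p, hpath, hp, hsub⟩ := Walk.exists_isPath_indBody hDAG.2.1 hDAG.2.2 _ hwalk
  exact ⟨p, ⟨hpath, hp⟩, hsub⟩

theorem statement_16 (G : MixedGraph V) (hDAG : G.IsDAG) (L : Set V)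
    (Z₀ Z₁ Z₂ : V) (hne₀₁ : Z₀ ≠ Z₁) (hne₁₂ : Z₁ ≠ Z₂) (hne₀₂ : Z₀ ≠ Z₂)
    (e₁ e₂ : EType)
    (h₁ : (G.mag L).IsEdge e₁ Z₀ Z₁) (h₂ : (G.mag L).IsEdge e₂ Z₁ Z₂)
    (hnoncol : ¬ (e₁.headSnd ∧ e₂.headFst))
    (π₀₁ : G.Walk Z₀ Z₁) (h₀₁ : G.IsInducing ∅ L π₀₁) (hhead₀₁ : π₀₁.headAtEnd)
    (π₁₂ : G.Walk Z₁ Z₂) (h₁₂ : G.IsInducing ∅ L π₁₂) (hhead₁₂ : π₁₂.headAtStart) :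
    ∃ p : G.Walk Z₀ Z₂, G.IsInducing ∅ L p ∧
      p.support.Sublist (π₀₁.append π₁₂).support :=
  statement_16_general G hDAG L Z₀ Z₁ Z₂ e₁ e₂ h₁ h₂ hnoncol π₀₁ h₀₁ hhead₀₁ π₁₂ h₁₂ hhead₁₂
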